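/- arXiv:2205.03076 — 5 statements merged into one kernel-verified Lean document; each statement's English description precedes it below -/
import Mathlib

section
/- Let L^in, L^out : ℝⁿ × ℝᵐ → ℝ be C¹ with L^in C² in φ, and suppose θ ↦ φ*_θ is a differentiable function on an open set with ∂_φL^in(φ*_θ, θ) = 0 and ∂²_φL^in(φ*_θ, θ) invertible for all θ in that set. Then the total derivative of θ ↦ L^out(φ*_θ, θ) equals ∂_θL^out(φ*_θ, θ) - ∂_φL^out(φ*_θ, θ)·(∂²_φL^in(φ*_θ, θ))⁻¹·∂_θ∂_φL^in(φ*_θ, θ). -/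
/-!
Differentiating the stationarity condition `∂_φ L^in (φ*_θ, θ) = 0` along `θ` by the chain rule
gives `∂²_φ L^in · Dφ* + ∂_θ ∂_φ L^in = 0`, so invertibility of the Hessian identifies `Dφ* v`
with the vector `w` of the statement. The chain rule for `θ ↦ L^out (φ*_θ, θ)` then splits its
derivative into `∂_θ L^out v + ∂_φ L^out (Dφ* v)`.
-/

open ContinuousLinearMap

section

variable {𝕜 : Type*} [NontriviallyNormedField 𝕜]
  {E F G : Type*} [NormedAddCommGroup E] [NormedSpace 𝕜 E] [NormedAddCommGroup F] [NormedSpace 𝕜 F]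
  [NormedAddCommGroup G] [NormedSpace 𝕜 G]

theorem fderiv_comp_graph_apply {L : E × F → G} {f : F → E} {θ : F}
    (hL : DifferentiableAt 𝕜 L (f θ, θ)) (hf : DifferentiableAt 𝕜 f θ) (v : F) :
    fderiv 𝕜 (fun t => L (f t, t)) θ v
      = fderiv 𝕜 (fun x => L (x, θ)) (f θ) (fderiv 𝕜 f θ v)
        + fderiv 𝕜 (fun t => L (f θ, t)) θ v := by
  have hgraph : HasFDerivAt (fun t => L (f t, t)) _ θ :=
    hL.hasFDerivAt.comp (f := fun t => (f t, t)) θ (hf.hasFDerivAt.prodMk (hasFDerivAt_id θ))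
  have hfst : HasFDerivAt (fun x => L (x, θ)) _ (f θ) :=
    hL.hasFDerivAt.comp (f θ) (hasFDerivAt_prodMk_left (𝕜 := 𝕜) (f θ) θ)
  have hsnd : HasFDerivAt (fun t => L (f θ, t)) _ θ :=
    hL.hasFDerivAt.comp θ (hasFDerivAt_prodMk_right (𝕜 := 𝕜) (f θ) θ)
  rw [hgraph.fderiv, hfst.fderiv, hsnd.fderiv, comp_apply, comp_apply, comp_apply, ← map_add]
  simp

/-- Implicit differentiation of `P (f t, t) = 0`. -/
theorem fderiv_fst_apply_fderiv_eq_neg_of_eventually_eq_zero {P : E × F → G} {f : F → E} {θ : F}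
    (hP : DifferentiableAt 𝕜 P (f θ, θ)) (hf : DifferentiableAt 𝕜 f θ)
    (hzero : ∀ᶠ t in nhds θ, P (f t, t) = 0) (v : F) :
    fderiv 𝕜 (fun x => P (x, θ)) (f θ) (fderiv 𝕜 f θ v) = - fderiv 𝕜 (fun t => P (f θ, t)) θ v := by
  have h := fderiv_comp_graph_apply hP hf v
  rw [Filter.EventuallyEq.fderiv_eq (f := fun _ => 0) hzero, fderiv_const_apply] at h
  exact eq_neg_of_add_eq_zero_left h.symm

theorem ContDiff.fderiv_partial_fst {n : WithTop ℕ∞} {L : E × F → G} (hL : ContDiff 𝕜 (n + 1) L) :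
    ContDiff 𝕜 n fun p : E × F => fderiv 𝕜 (fun x => L (x, p.2)) p.1 :=
  ContDiff.fderiv (f := fun p x => L (x, p.2)) (hL.comp (contDiff_snd.prodMk contDiff_fst.snd))
    contDiff_fst le_rfl

end

/-- The outer gradient formula: if `f = (θ ↦ φ*_θ)` is differentiable with
`∂_φL^in(f θ, θ) = 0` and invertible Hessian on `U`, then the total derivative of
`θ ↦ L^out(φ*_θ, θ)` in the direction `v` equals
`∂_θL^out v + ∂_φL^out w`, where `w = -(∂²_φL^in)⁻¹ ∂_θ∂_φL^in v`
(characterized by `∂²_φL^in w = - ∂_θ∂_φL^in v`). -/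
theorem stmt_6 {n m : ℕ}
    (Lin Lout : EuclideanSpace ℝ (Fin n) × EuclideanSpace ℝ (Fin m) → ℝ)
    (hLin : ContDiff ℝ 2 Lin) (hLout : ContDiff ℝ 1 Lout)
    (U : Set (EuclideanSpace ℝ (Fin m))) (hU : IsOpen U)
    (f : EuclideanSpace ℝ (Fin m) → EuclideanSpace ℝ (Fin n))
    (hf : ∀ θ ∈ U, DifferentiableAt ℝ f θ)
    (hstat : ∀ θ ∈ U, fderiv ℝ (fun ψ => Lin (ψ, θ)) (f θ) = 0)
    (hhess : ∀ θ ∈ U, Function.Bijective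
      (fderiv ℝ (fun ψ => fderiv ℝ (fun χ => Lin (χ, θ)) ψ) (f θ))) :
    ∀ θ ∈ U, ∀ v : EuclideanSpace ℝ (Fin m), ∀ w : EuclideanSpace ℝ (Fin n),
      (fderiv ℝ (fun ψ => fderiv ℝ (fun χ => Lin (χ, θ)) ψ) (f θ)) w
          = - (fderiv ℝ (fun t => fderiv ℝ (fun χ => Lin (χ, t)) (f θ)) θ) v →
      fderiv ℝ (fun t => Lout (f t, t)) θ v
        = (fderiv ℝ (fun t => Lout (f θ, t)) θ) v
          + (fderiv ℝ (fun ψ => Lout (ψ, θ)) (f θ)) w := by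
  intro θ hθ v w hw
  have hgrad : Differentiable ℝ fun p : EuclideanSpace ℝ (Fin n) × EuclideanSpace ℝ (Fin m) =>
      fderiv ℝ (fun χ => Lin (χ, p.2)) p.1 :=
    (ContDiff.fderiv_partial_fst (n := 1) hLin).differentiable one_ne_zero
  have hDf : fderiv ℝ f θ v = w := (hhess θ hθ).injective <|
    (fderiv_fst_apply_fderiv_eq_neg_of_eventually_eq_zero (hgrad _) (hf θ hθ)
      (Filter.eventually_of_mem (hU.mem_nhds hθ) hstat) v).trans hw.symm
  rw [fderiv_comp_graph_apply ((hLout.differentiable one_ne_zero) _) (hf θ hθ), hDf, add_comm]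
end

section
/- Let L^in, L^out : ℝⁿ × ℝᵐ → ℝ be twice continuously differentiable, and define the augmented loss 𝓛(φ, θ, β) = L^in(φ, θ) + β·L^out(φ, θ). Let φ̄ satisfy ∂_φ𝓛(φ̄, θ̄, β̄) = 0 with ∂²_φ𝓛(φ̄, θ̄, β̄) invertible. Then there is a neighborhood of (θ̄, β̄) and a C¹ function (θ, β) ↦ φ*_{θ,β} with φ*_{θ̄,β̄} = φ̄ and ∂_φ𝓛(φ*_{θ,β}, θ, β) = 0 on this neighborhood, such that d_θ [∂_β𝓛(φ*_{θ,β}, θ, β)] = (d_β [∂_θ𝓛(φ*_{θ,β}, θ, β)])ᵀ on this neighborhood. -/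
/-!
The implicit function theorem, applied to the stationarity equation `∂_φ 𝓛 = 0`, gives a C¹
family of stationary points `φ*_q`, `q = (θ, β)`. Since `∂_φ 𝓛` vanishes along it, the value
function `V q = 𝓛(φ*_q, q)` has derivative `∂_q 𝓛(φ*_q, q)` (envelope theorem), and this
derivative is C¹. As `∂_β 𝓛 = L^out`, the two sides of the identity are the mixed second
derivatives `∂_θ ∂_β V` and `∂_β ∂_θ V`, which agree by symmetry of the second derivative.
-/

open ContinuousLinearMap Filter Topology

section Partial

variable {𝕜 : Type*} [NontriviallyNormedField 𝕜]
  {E₁ E₂ G : Type*} [NormedAddCommGroup E₁] [NormedSpace 𝕜 E₁] [NormedAddCommGroup E₂]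
  [NormedSpace 𝕜 E₂] [NormedAddCommGroup G] [NormedSpace 𝕜 G]

theorem fderiv_comp_prodMk_left {h : E₁ × E₂ → G} {x : E₁} {y : E₂}
    (hh : DifferentiableAt 𝕜 h (x, y)) :
    fderiv 𝕜 (fun t => h (t, y)) x = fderiv 𝕜 h (x, y) ∘L inl 𝕜 E₁ E₂ :=
  (hh.hasFDerivAt.comp x (hasFDerivAt_prodMk_left x y)).fderiv

theorem fderiv_comp_prodMk_right {h : E₁ × E₂ → G} {x : E₁} {y : E₂}
    (hh : DifferentiableAt 𝕜 h (x, y)) :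
    fderiv 𝕜 (fun t => h (x, t)) y = fderiv 𝕜 h (x, y) ∘L inr 𝕜 E₁ E₂ :=
  (hh.hasFDerivAt.comp y (hasFDerivAt_prodMk_right x y)).fderiv

theorem hasFDerivAt_comp_prodMk_of_fderiv_fst_eq_zero {L : E₁ × E₂ → G} {f : E₂ → E₁} {q : E₂}
    (hL : DifferentiableAt 𝕜 L (f q, q)) (hf : DifferentiableAt 𝕜 f q)
    (hstat : fderiv 𝕜 (fun x => L (x, q)) (f q) = 0) :
    HasFDerivAt (fun q' => L (f q', q')) (fderiv 𝕜 (fun q' => L (f q, q')) q) q := by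
  rw [fderiv_comp_prodMk_left hL] at hstat
  rw [fderiv_comp_prodMk_right hL]
  have hpath : HasFDerivAt (fun q' => (f q', q')) ((fderiv 𝕜 f q).prod (.id 𝕜 E₂)) q :=
    hf.hasFDerivAt.prodMk (hasFDerivAt_id q)
  have hchain := HasFDerivAt.comp q (f := fun q' => (f q', q')) hL.hasFDerivAt hpath
  refine hchain.congr_fderiv (ContinuousLinearMap.ext fun v => ?_)
  have h0 := DFunLike.congr_fun hstat (fderiv 𝕜 f q v)
  have hsplit : (fderiv 𝕜 f q v, v) = (fderiv 𝕜 f q v, 0) + (0, v) := by simp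
  simp only [comp_apply, inl_apply, zero_apply] at h0
  simp only [comp_apply, prod_apply, coe_id', id_eq, inr_apply, hsplit, map_add, h0, zero_add]

theorem fderiv_apply_inr_eq_fderiv_comp_inl [IsRCLikeNormedField 𝕜] {V : E₁ × E₂ → G}
    {V' : E₁ × E₂ → E₁ × E₂ →L[𝕜] G} {p : E₁ × E₂}
    (hV : ∀ᶠ q in 𝓝 p, HasFDerivAt V (V' q) q) (hV' : DifferentiableAt 𝕜 V' p) (w : E₂) :
    fderiv 𝕜 (fun t => V' (t, p.2) (0, w)) p.1
      = fderiv 𝕜 (fun b => V' (p.1, b) ∘L inl 𝕜 E₁ E₂) p.2 w := by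
  have hsymm := second_derivative_symmetric_of_eventually hV hV'.hasFDerivAt
  have h₁ : HasFDerivAt (fun t => V' (t, p.2) (0, w)) _ p.1 :=
    (apply 𝕜 G ((0 : E₁), w)).hasFDerivAt.comp p.1
      (hV'.hasFDerivAt.comp p.1 (hasFDerivAt_prodMk_left p.1 p.2))
  have h₂ : HasFDerivAt (fun b => V' (p.1, b) ∘L inl 𝕜 E₁ E₂) _ p.2 :=
    ((compL 𝕜 E₁ (E₁ × E₂) G).flip (inl 𝕜 E₁ E₂)).hasFDerivAt.comp p.2
      (hV'.hasFDerivAt.comp p.2 (hasFDerivAt_prodMk_right p.1 p.2))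
  rw [h₁.fderiv, h₂.fderiv]
  ext v
  simpa using hsymm (v, 0) (0, w)

end Partial

section Stationary

variable {𝕜 : Type*} [RCLike 𝕜]
  {E Q G : Type*} [NormedAddCommGroup E] [NormedSpace 𝕜 E] [CompleteSpace E]
  [NormedAddCommGroup Q] [NormedSpace 𝕜 Q] [CompleteSpace Q]
  [NormedAddCommGroup G] [NormedSpace 𝕜 G] [CompleteSpace G]

theorem ContinuousLinearMap.isInvertible_of_bijective {A : E →L[𝕜] G}
    (hA : Function.Bijective A) : A.IsInvertible :=
  ⟨.ofBijective A (LinearMap.ker_eq_bot.mpr hA.1) (LinearMap.range_eq_top.mpr hA.2),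
    ContinuousLinearEquiv.coe_ofBijective _ _ _⟩

theorem exists_contDiffOn_fderiv_fst_eq_zero {L : E × Q → G} (hL : ContDiff 𝕜 2 L)
    {x₀ : E} {q₀ : Q} (hstat : fderiv 𝕜 (fun x => L (x, q₀)) x₀ = 0)
    (hhess : Function.Bijective (fderiv 𝕜 (fun x => fderiv 𝕜 (fun y => L (y, q₀)) x) x₀)) :
    ∃ W : Set Q, IsOpen W ∧ q₀ ∈ W ∧ ∃ f : Q → E, ContDiffOn 𝕜 1 f W ∧ f q₀ = x₀ ∧
      ∀ q ∈ W, fderiv 𝕜 (fun x => L (x, q)) (f q) = 0 := by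
  set g : Q × E → E →L[𝕜] G := fun u => fderiv 𝕜 (fun y => L (y, u.1)) u.2
  have hg : ContDiff 𝕜 1 g :=
    (hL.comp (contDiff_snd.prodMk contDiff_fst.fst)).fderiv contDiff_snd le_rfl
  have hinv : (fderiv 𝕜 g (q₀, x₀) ∘L inr 𝕜 Q E).IsInvertible := by
    rw [← fderiv_comp_prodMk_right (hg.differentiable one_ne_zero _)]
    exact isInvertible_of_bijective hhess
  have hgc := hg.contDiffAt (x := (q₀, x₀))
  have hsolves := hgc.eventually_apply_implicitFunction one_ne_zero hinv
  have hsmooth := (hgc.contDiffAt_implicitFunction one_ne_zero hinv).eventually (by simp)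
  obtain ⟨W, hW, hWo, hq₀⟩ := eventually_nhds_iff.mp (hsolves.and hsmooth)
  exact ⟨W, hWo, hq₀, hgc.implicitFunction one_ne_zero hinv,
    fun q hq => (hW q hq).2.contDiffWithinAt, hgc.implicitFunction_apply_self one_ne_zero hinv,
    fun q hq => (hW q hq).1.trans hstat⟩

end Stationary

section AugmentedLoss

variable {𝕜 : Type*} [NontriviallyNormedField 𝕜]
  {E Θ : Type*} [NormedAddCommGroup E] [NormedSpace 𝕜 E] [NormedAddCommGroup Θ] [NormedSpace 𝕜 Θ]

def augmentedLoss (Lin Lout : E × Θ → 𝕜) : E × (Θ × 𝕜) → 𝕜 :=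
  fun x => Lin (x.1, x.2.1) + x.2.2 * Lout (x.1, x.2.1)

variable {Lin Lout : E × Θ → 𝕜}

theorem contDiff_augmentedLoss {n : WithTop ℕ∞} (hLin : ContDiff 𝕜 n Lin)
    (hLout : ContDiff 𝕜 n Lout) : ContDiff 𝕜 n (augmentedLoss Lin Lout) :=
  (hLin.comp (contDiff_fst.prodMk contDiff_snd.fst)).add
    (contDiff_snd.snd.mul (hLout.comp (contDiff_fst.prodMk contDiff_snd.fst)))

theorem fderiv_augmentedLoss_snd_apply_zero_one {φ : E} {q : Θ × 𝕜}
    (hLin : DifferentiableAt 𝕜 Lin (φ, q.1)) (hLout : DifferentiableAt 𝕜 Lout (φ, q.1)) :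
    fderiv 𝕜 (fun q' => augmentedLoss Lin Lout (φ, q')) q (0, 1) = Lout (φ, q.1) := by
  have hd : DifferentiableAt 𝕜 (fun q' => augmentedLoss Lin Lout (φ, q')) (q.1, q.2) := by
    unfold augmentedLoss; fun_prop
  rw [show ((0, 1) : Θ × 𝕜) = inr 𝕜 Θ 𝕜 1 from rfl, ← comp_apply, ← fderiv_comp_prodMk_right hd]
  simp [augmentedLoss]

end AugmentedLoss

/-- Equilibrium propagation theorem (Scellier & Bengio): for the augmented loss
`𝓛(φ, θ, β) = L^in(φ, θ) + β L^out(φ, θ)`, if `φ̄` is a stationary point of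
`𝓛(·, θ̄, β̄)` with invertible Hessian, then near `(θ̄, β̄)` there is a C¹ implicit
stationary-point function `(θ, β) ↦ φ*_{θ,β}` along which
`d_θ[∂_β𝓛(φ*_{θ,β}, θ, β)] = (d_β[∂_θ𝓛(φ*_{θ,β}, θ, β)])ᵀ`. -/
theorem stmt_7 {n m : ℕ}
    (Lin Lout : EuclideanSpace ℝ (Fin n) × EuclideanSpace ℝ (Fin m) → ℝ)
    (hLin : ContDiff ℝ 2 Lin) (hLout : ContDiff ℝ 2 Lout)
    (φb : EuclideanSpace ℝ (Fin n)) (θb : EuclideanSpace ℝ (Fin m)) (βb : ℝ)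
    (hstat : fderiv ℝ (fun ψ => Lin (ψ, θb) + βb * Lout (ψ, θb)) φb = 0)
    (hhess : Function.Bijective
      (fderiv ℝ (fun ψ => fderiv ℝ (fun χ => Lin (χ, θb) + βb * Lout (χ, θb)) ψ) φb)) :
    ∃ W : Set (EuclideanSpace ℝ (Fin m) × ℝ), IsOpen W ∧ (θb, βb) ∈ W ∧
      ∃ f : EuclideanSpace ℝ (Fin m) × ℝ → EuclideanSpace ℝ (Fin n),
        ContDiffOn ℝ 1 f W ∧ f (θb, βb) = φb ∧
        (∀ p ∈ W, fderiv ℝ (fun ψ => Lin (ψ, p.1) + p.2 * Lout (ψ, p.1)) (f p) = 0) ∧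
        ∀ p ∈ W,
          fderiv ℝ (fun t => Lout (f (t, p.2), t)) p.1
            = deriv (fun b =>
                fderiv ℝ (fun t => Lin (f (p.1, b), t) + b * Lout (f (p.1, b), t)) p.1) p.2 := by
  set L := augmentedLoss Lin Lout
  have hL : ContDiff ℝ 2 L := contDiff_augmentedLoss hLin hLout
  have hL₁ : Differentiable ℝ L := hL.differentiable two_ne_zero
  obtain ⟨W, hWo, hW₀, f, hf, hf₀, hfstat⟩ :=
    exists_contDiffOn_fderiv_fst_eq_zero (q₀ := (θb, βb)) hL hstat hhess
  refine ⟨W, hWo, hW₀, f, hf, hf₀, hfstat, fun p hp => ?_⟩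
  set D := fun q => fderiv ℝ (fun q' => L (f q, q')) q
  have hfd : ∀ q ∈ W, DifferentiableAt ℝ f q := fun q hq =>
    (hf.differentiableOn one_ne_zero q hq).differentiableAt (hWo.mem_nhds hq)
  have hV : ∀ᶠ q in 𝓝 p, HasFDerivAt (fun q => L (f q, q)) (D q) q :=
    eventually_of_mem (hWo.mem_nhds hp) fun q hq =>
      hasFDerivAt_comp_prodMk_of_fderiv_fst_eq_zero (hL₁ _) (hfd q hq) (hfstat q hq)
  have hD : DifferentiableAt ℝ D p := by
    have hpartial : ContDiff ℝ 1 fun u : _ × (_ × ℝ) => fderiv ℝ (fun q' => L (u.1, q')) u.2 :=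
      (hL.comp (contDiff_fst.fst.prodMk contDiff_snd)).fderiv contDiff_snd le_rfl
    exact (hpartial.comp_contDiffOn (hf.prodMk contDiffOn_id)).differentiableOn one_ne_zero p hp
      |>.differentiableAt (hWo.mem_nhds hp)
  calc fderiv ℝ (fun t => Lout (f (t, p.2), t)) p.1
      = fderiv ℝ (fun t => D (t, p.2) (0, 1)) p.1 := by
        congr 1; funext t
        exact (fderiv_augmentedLoss_snd_apply_zero_one (q := (t, p.2))
          (hLin.differentiable two_ne_zero _) (hLout.differentiable two_ne_zero _)).symm
    _ = fderiv ℝ (fun b => D (p.1, b) ∘L inl ℝ _ ℝ) p.2 1 :=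
        fderiv_apply_inr_eq_fderiv_comp_inl hV hD 1
    _ = _ := by
        congr 2; funext b
        exact (fderiv_comp_prodMk_left (h := fun q' => L (f (p.1, b), q')) (by fun_prop)).symm
end

section
/- Under the equilibrium propagation setting with 𝓛(φ, θ, β) = L^in(φ, θ) + β·L^out(φ, θ), where (θ, β) ↦ φ*_{θ,β} is the C¹ implicit stationary-point function defined near β = 0 with φ*_{θ,0} = φ*_θ, the outer gradient satisfies ∇_θ = d/dθ [L^out(φ*_θ, θ)] = d/dβ [∂_θ𝓛(φ*_{θ,β}, θ, β)]ᵀ evaluated at β = 0. -/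
/-!
Write `∇𝓛(φ, θ, β) = DL^in(φ, θ) + β • DL^out(φ, θ)` for the derivative in `(φ, θ)`.
Since the equilibrium `f` is only C¹, we cannot exchange `d/dθ` and `d/dβ`; instead we
differentiate the stationarity identity `∇𝓛(f p, p) ∘ inl = 0` once at `(θ, 0)`.
With `S = D²L^in` and `T = DL^out` this gives `S (Df u, u.1) (v, 0) + u.2 * T (v, 0) = 0`.
Testing it on `(u, v) = ((w, 0), Df (0, 1))` and `((0, 1), Df (w, 0))` and using the symmetry
of `S` turns the `φ`-part `T (Df (w, 0), 0)` of the outer gradient into the mixed term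
`S (Df (0, 1), 0) (0, w)` of the `β`-derivative of `∂_θ𝓛`.
-/

open ContinuousLinearMap Filter Topology

section EquilibriumPropagation

variable {E F : Type*} [NormedAddCommGroup E] [NormedSpace ℝ E]
  [NormedAddCommGroup F] [NormedSpace ℝ F]

theorem fderiv_add_const_mul_prodMk_left {L₁ L₂ : E × F → ℝ} {x : E} {y : F} (b : ℝ)
    (h₁ : DifferentiableAt ℝ L₁ (x, y)) (h₂ : DifferentiableAt ℝ L₂ (x, y)) :
    fderiv ℝ (fun x' => L₁ (x', y) + b * L₂ (x', y)) x
      = (fderiv ℝ L₁ (x, y) + b • fderiv ℝ L₂ (x, y)).comp (inl ℝ E F) :=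
  HasFDerivAt.fderiv <| (h₁.hasFDerivAt.add (h₂.hasFDerivAt.const_mul b)).comp
    (g := fun z => L₁ z + b * L₂ z) x (hasFDerivAt_prodMk_left x y)

theorem fderiv_add_const_mul_prodMk_right {L₁ L₂ : E × F → ℝ} {x : E} {y : F} (b : ℝ)
    (h₁ : DifferentiableAt ℝ L₁ (x, y)) (h₂ : DifferentiableAt ℝ L₂ (x, y)) :
    fderiv ℝ (fun y' => L₁ (x, y') + b * L₂ (x, y')) y
      = (fderiv ℝ L₁ (x, y) + b • fderiv ℝ L₂ (x, y)).comp (inr ℝ E F) :=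
  HasFDerivAt.fderiv <| (h₁.hasFDerivAt.add (h₂.hasFDerivAt.const_mul b)).comp
    (g := fun z => L₁ z + b * L₂ z) y (hasFDerivAt_prodMk_right x y)

theorem HasFDerivAt.comp_clm_eq_zero_of_eventually {X G H J : Type*}
    [NormedAddCommGroup X] [NormedSpace ℝ X] [NormedAddCommGroup G] [NormedSpace ℝ G]
    [NormedAddCommGroup H] [NormedSpace ℝ H] [NormedAddCommGroup J] [NormedSpace ℝ J]
    {K : X → H →L[ℝ] J} {K' : X →L[ℝ] H →L[ℝ] J} {x : X} (hK : HasFDerivAt K K' x)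
    {c : G →L[ℝ] H} (hzero : ∀ᶠ p in 𝓝 x, (K p).comp c = 0) (u : X) :
    (K' u).comp c = 0 := by
  have hcomp : HasFDerivAt (fun p => (K p).comp c) (((compL ℝ G H J).flip c).comp K') x :=
    ((compL ℝ G H J).flip c).hasFDerivAt.comp x hK
  have hconst : HasFDerivAt (fun p => (K p).comp c) (0 : X →L[ℝ] G →L[ℝ] J) x :=
    (hasFDerivAt_const 0 x).congr_of_eventuallyEq hzero
  simpa using congr($(hcomp.unique hconst) u)

variable {Lin Lout : E × F → ℝ} {f : F × ℝ → E} {θ : F}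

theorem hasFDerivAt_fderiv_lagrangian_comp {Df : F × ℝ →L[ℝ] E}
    (hf : HasFDerivAt f Df (θ, 0))
    (hLin : DifferentiableAt ℝ (fderiv ℝ Lin) (f (θ, 0), θ))
    (hLout : DifferentiableAt ℝ (fderiv ℝ Lout) (f (θ, 0), θ)) :
    HasFDerivAt (fun p : F × ℝ => fderiv ℝ Lin (f p, p.1) + p.2 • fderiv ℝ Lout (f p, p.1))
      ((fderiv ℝ (fderiv ℝ Lin) (f (θ, 0), θ)).comp (Df.prod (fst ℝ F ℝ))
        + (snd ℝ F ℝ).smulRight (fderiv ℝ Lout (f (θ, 0), θ))) (θ, 0) := by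
  have hg : HasFDerivAt (fun p : F × ℝ => (f p, p.1)) (Df.prod (fst ℝ F ℝ)) (θ, 0) :=
    hf.prodMk hasFDerivAt_fst
  have hout := hasFDerivAt_snd.smul (hLout.hasFDerivAt.comp (θ, 0) hg)
  simp only [zero_smul, zero_add] at hout
  exact (hLin.hasFDerivAt.comp (θ, 0) hg).add hout

theorem apply_eq_of_linearized_stationarity {S : E × F →L[ℝ] E × F →L[ℝ] ℝ}
    (hS : ∀ v w, S v w = S w v) {T : E × F →L[ℝ] ℝ} {Df : F × ℝ →L[ℝ] E}
    (hstat : ∀ u v, S (Df u, u.1) (v, 0) + u.2 * T (v, 0) = 0) (w : F) :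
    T (Df (w, 0), w) = S (Df (0, 1), 0) (0, w) + T (0, w) := by
  have h₁ := hstat (w, 0) (Df (0, 1))
  have h₂ := hstat (0, 1) (Df (w, 0))
  have hsplit : ((Df (w, 0), w) : E × F) = (Df (w, 0), 0) + (0, w) := by simp
  rw [hsplit, map_add, add_apply] at h₁
  rw [hsplit, map_add]
  simp only [zero_mul, add_zero, one_mul] at h₁ h₂
  linarith [hS (Df (0, 1), 0) (Df (w, 0), 0), hS (Df (0, 1), 0) (0, w)]

theorem linearized_stationarity {Df : F × ℝ →L[ℝ] E} (hf : HasFDerivAt f Df (θ, 0))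
    (hLin : DifferentiableAt ℝ (fderiv ℝ Lin) (f (θ, 0), θ))
    (hLout : DifferentiableAt ℝ (fderiv ℝ Lout) (f (θ, 0), θ))
    (hstat : ∀ᶠ p in 𝓝 (θ, 0),
      (fderiv ℝ Lin (f p, p.1) + p.2 • fderiv ℝ Lout (f p, p.1)).comp (inl ℝ E F) = 0)
    (u : F × ℝ) (v : E) :
    fderiv ℝ (fderiv ℝ Lin) (f (θ, 0), θ) (Df u, u.1) (v, 0)
      + u.2 * fderiv ℝ Lout (f (θ, 0), θ) (v, 0) = 0 := by
  have hK := hasFDerivAt_fderiv_lagrangian_comp hf hLin hLout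
  simpa using congr($(hK.comp_clm_eq_zero_of_eventually hstat u) v)

theorem hasDerivAt_fderiv_lagrangian_comp_inr {Df : F × ℝ →L[ℝ] E}
    (hf : HasFDerivAt f Df (θ, 0))
    (hLin : DifferentiableAt ℝ (fderiv ℝ Lin) (f (θ, 0), θ))
    (hLout : DifferentiableAt ℝ (fderiv ℝ Lout) (f (θ, 0), θ)) :
    HasDerivAt (fun b : ℝ =>
        (fderiv ℝ Lin (f (θ, b), θ) + b • fderiv ℝ Lout (f (θ, b), θ)).comp (inr ℝ E F))
      ((fderiv ℝ (fderiv ℝ Lin) (f (θ, 0), θ) (Df (0, 1), 0)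
        + fderiv ℝ Lout (f (θ, 0), θ)).comp (inr ℝ E F)) 0 := by
  have hline : HasDerivAt (fun b : ℝ => ((θ, b) : F × ℝ)) (0, 1) 0 :=
    (hasDerivAt_const 0 θ).prodMk (hasDerivAt_id 0)
  have hK := (hasFDerivAt_fderiv_lagrangian_comp hf hLin hLout).comp_hasDerivAt 0 hline
  simpa using hK.clm_comp (hasDerivAt_const 0 (inr ℝ E F))

theorem hasFDerivAt_comp_equilibrium {Df : F × ℝ →L[ℝ] E} (hf : HasFDerivAt f Df (θ, 0))
    (hLout : DifferentiableAt ℝ Lout (f (θ, 0), θ)) :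
    HasFDerivAt (fun t => Lout (f (t, 0), t))
      ((fderiv ℝ Lout (f (θ, 0), θ)).comp ((Df.comp (inl ℝ F ℝ)).prod (.id ℝ F))) θ :=
  hLout.hasFDerivAt.comp θ (f := fun t => (f (t, 0), t))
    ((hf.comp θ (hasFDerivAt_prodMk_left θ (0 : ℝ))).prodMk (hasFDerivAt_id θ))

end EquilibriumPropagation

theorem stmt_8_general {n m : ℕ}
    (Lin Lout : EuclideanSpace ℝ (Fin n) × EuclideanSpace ℝ (Fin m) → ℝ)
    (hLin : ContDiff ℝ 2 Lin) (hLout : ContDiff ℝ 2 Lout)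
    (W : Set (EuclideanSpace ℝ (Fin m) × ℝ)) (hW : IsOpen W)
    (f : EuclideanSpace ℝ (Fin m) × ℝ → EuclideanSpace ℝ (Fin n))
    (hf : ContDiffOn ℝ 1 f W)
    (hstat : ∀ p ∈ W, fderiv ℝ (fun ψ => Lin (ψ, p.1) + p.2 * Lout (ψ, p.1)) (f p) = 0)
    (θ : EuclideanSpace ℝ (Fin m)) (hθ : (θ, (0 : ℝ)) ∈ W) :
    fderiv ℝ (fun t => Lout (f (t, (0 : ℝ)), t)) θ
      = deriv (fun b =>
          fderiv ℝ (fun t => Lin (f (θ, b), t) + b * Lout (f (θ, b), t)) θ) 0 := by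
  have hLin₁ : Differentiable ℝ Lin := hLin.differentiable two_ne_zero
  have hLout₁ : Differentiable ℝ Lout := hLout.differentiable two_ne_zero
  have hLin₂ : Differentiable ℝ (fderiv ℝ Lin) :=
    (hLin.fderiv_right (m := 1) le_rfl).differentiable one_ne_zero
  have hLout₂ : Differentiable ℝ (fderiv ℝ Lout) :=
    (hLout.fderiv_right (m := 1) le_rfl).differentiable one_ne_zero
  have hf₀ : HasFDerivAt f (fderiv ℝ f (θ, 0)) (θ, 0) :=
    ((hf.differentiableOn one_ne_zero).differentiableAt (hW.mem_nhds hθ)).hasFDerivAt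
  have hlin := linearized_stationarity hf₀ (hLin₂ _) (hLout₂ _) <| by
    filter_upwards [hW.mem_nhds hθ] with p hp
    rw [← fderiv_add_const_mul_prodMk_left p.2 (hLin₁ _) (hLout₁ _)]
    exact hstat p hp
  have hrhs : (fun b : ℝ => fderiv ℝ (fun t => Lin (f (θ, b), t) + b * Lout (f (θ, b), t)) θ)
      = fun b => (fderiv ℝ Lin (f (θ, b), θ) + b • fderiv ℝ Lout (f (θ, b), θ)).comp
        (inr ℝ _ _) :=
    funext fun b => fderiv_add_const_mul_prodMk_right b (hLin₁ _) (hLout₁ _)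
  rw [(hasFDerivAt_comp_equilibrium hf₀ (hLout₁ _)).fderiv, hrhs,
    (hasDerivAt_fderiv_lagrangian_comp_inr hf₀ (hLin₂ _) (hLout₂ _)).deriv]
  ext w
  simpa using apply_eq_of_linearized_stationarity
    (hLin.contDiffAt.isSymmSndFDerivAt (by simp)) hlin w

/-- Equilibrium propagation form of the outer gradient: with
`𝓛(φ, θ, β) = L^in(φ, θ) + β L^out(φ, θ)` and `(θ, β) ↦ φ*_{θ,β}` the C¹ implicit
stationary-point function (with invertible Hessians) defined near `β = 0`, the outer
gradient satisfies `∇_θ = d_θ[L^out(φ*_{θ,0}, θ)] = d_β[∂_θ𝓛(φ*_{θ,β}, θ, β)]ᵀ |_{β=0}`. -/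
theorem stmt_8 {n m : ℕ}
    (Lin Lout : EuclideanSpace ℝ (Fin n) × EuclideanSpace ℝ (Fin m) → ℝ)
    (hLin : ContDiff ℝ 2 Lin) (hLout : ContDiff ℝ 2 Lout)
    (W : Set (EuclideanSpace ℝ (Fin m) × ℝ)) (hW : IsOpen W)
    (f : EuclideanSpace ℝ (Fin m) × ℝ → EuclideanSpace ℝ (Fin n))
    (hf : ContDiffOn ℝ 1 f W)
    (hstat : ∀ p ∈ W, fderiv ℝ (fun ψ => Lin (ψ, p.1) + p.2 * Lout (ψ, p.1)) (f p) = 0)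
    (hhess : ∀ p ∈ W, Function.Bijective
      (fderiv ℝ (fun ψ => fderiv ℝ (fun χ => Lin (χ, p.1) + p.2 * Lout (χ, p.1)) ψ) (f p)))
    (θ : EuclideanSpace ℝ (Fin m)) (hθ : (θ, (0 : ℝ)) ∈ W) :
    fderiv ℝ (fun t => Lout (f (t, (0 : ℝ)), t)) θ
      = deriv (fun b =>
          fderiv ℝ (fun t => Lin (f (θ, b), t) + b * Lout (f (θ, b), t)) θ) 0 :=
  stmt_8_general Lin Lout hLin hLout W hW f hf hstat θ hθ
end

section
/- In the setting of the implicit differentiation error-bound theorem with ‖φ*_θ - φ̂‖ ≤ δ < μ/(2ρ), the proxy vector satisfies ‖∂_φL^out(φ̂, θ)·(∂²_φL^in(φ̂, θ))⁻¹ - π*‖ ≤ (2δ/μ)·(L + Bρ/μ), where π* = ∂_φL^out(φ*_θ, θ)·(∂²_φL^in(φ*_θ, θ))⁻¹. -/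
noncomputable def gradPhi11 {n m : ℕ}
    (f : EuclideanSpace ℝ (Fin n) × EuclideanSpace ℝ (Fin m) → ℝ)
    (φ : EuclideanSpace ℝ (Fin n)) (θ : EuclideanSpace ℝ (Fin m)) :
    EuclideanSpace ℝ (Fin n) →L[ℝ] ℝ :=
  fderiv ℝ (fun ψ => f (ψ, θ)) φ

noncomputable def hess11 {n m : ℕ}
    (f : EuclideanSpace ℝ (Fin n) × EuclideanSpace ℝ (Fin m) → ℝ)
    (φ : EuclideanSpace ℝ (Fin n)) (θ : EuclideanSpace ℝ (Fin m)) :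
    EuclideanSpace ℝ (Fin n) →L[ℝ] (EuclideanSpace ℝ (Fin n) →L[ℝ] ℝ) :=
  fderiv ℝ (fun ψ => gradPhi11 f ψ θ) φ

/-!
Both `q` and `π*` solve linear systems whose operators are `μ`-coercive by strong convexity,
so `μ‖q - π*‖ ≤ ‖H(φ̂)(q - π*)‖`. Writing `H(φ̂)(q - π*) = (∇L^out(φ̂) - ∇L^out(φ*)) - (H(φ̂) - H(φ*))π*`
and using `‖π*‖ ≤ B/μ` gives `μ‖q - π*‖ ≤ Lδ + ρδB/μ`, which is half the claimed bound.
-/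

section

variable {E F : Type*} [NormedAddCommGroup E] [NormedSpace ℝ E]
  [SeminormedAddCommGroup F] [NormedSpace ℝ F]

theorem mul_norm_le_norm_apply_of_coercive {A : E →L[ℝ] E →L[ℝ] ℝ} {μ : ℝ}
    (hA : ∀ v, μ * ‖v‖ ^ 2 ≤ A v v) (v : E) : μ * ‖v‖ ≤ ‖A v‖ := by
  rcases eq_or_ne v 0 with rfl | hv
  · simp
  refine le_of_mul_le_mul_right ?_ (norm_pos_iff.mpr hv)
  calc μ * ‖v‖ * ‖v‖ = μ * ‖v‖ ^ 2 := by ring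
    _ ≤ A v v := hA v
    _ ≤ ‖A v v‖ := Real.le_norm_self _
    _ ≤ ‖A v‖ * ‖v‖ := (A v).le_opNorm v

theorem mul_norm_sub_le_of_apply_eq {A A' : E →L[ℝ] F} {μ : ℝ}
    (hA : ∀ v, μ * ‖v‖ ≤ ‖A v‖) {x x' : E} {b b' : F} (hx : A x = b) (hx' : A' x' = b') :
    μ * ‖x - x'‖ ≤ ‖b - b'‖ + ‖A - A'‖ * ‖x'‖ := by
  have hdiff : A (x - x') = (b - b') - (A - A') x' := by
    rw [map_sub, sub_apply, hx, hx']
    abel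
  calc μ * ‖x - x'‖ ≤ ‖A (x - x')‖ := hA _
    _ ≤ ‖b - b'‖ + ‖(A - A') x'‖ := hdiff ▸ norm_sub_le _ _
    _ ≤ ‖b - b'‖ + ‖A - A'‖ * ‖x'‖ := by gcongr; exact (A - A').le_opNorm x'

end

theorem stmt_11_general {n m : ℕ}
    (Lin Lout : EuclideanSpace ℝ (Fin n) × EuclideanSpace ℝ (Fin m) → ℝ)
    (μ ρ B L : ℝ) (hμ : 0 < μ) (hρ : 0 < ρ) (hL : 0 < L)
    (hsc : ∀ φ θ v, μ * ‖v‖ ^ 2 ≤ hess11 Lin φ θ v v)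
    (hHlip : ∀ θ φ φ', ‖hess11 Lin φ θ - hess11 Lin φ' θ‖ ≤ ρ * ‖φ - φ'‖)
    (hBlip : ∀ φ θ, ‖gradPhi11 Lout φ θ‖ ≤ B)
    (hsmooth : ∀ θ φ φ', ‖gradPhi11 Lout φ θ - gradPhi11 Lout φ' θ‖ ≤ L * ‖φ - φ'‖)
    (θ : EuclideanSpace ℝ (Fin m)) (φstar φhat : EuclideanSpace ℝ (Fin n))
    (δ : ℝ) (hφ : ‖φstar - φhat‖ ≤ δ)
    (pstar : EuclideanSpace ℝ (Fin n))
    (hpstar : hess11 Lin φstar θ pstar = gradPhi11 Lout φstar θ)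
    (q : EuclideanSpace ℝ (Fin n))
    (hq : hess11 Lin φhat θ q = gradPhi11 Lout φhat θ) :
    ‖q - pstar‖ ≤ (2 * δ / μ) * (L + B * ρ / μ) := by
  have coercive φ := mul_norm_le_norm_apply_of_coercive (hsc φ θ)
  have hδ : ‖φhat - φstar‖ ≤ δ := norm_sub_rev φstar φhat ▸ hφ
  have hδ0 : 0 ≤ δ := (norm_nonneg _).trans hδ
  have hpstar_le : ‖pstar‖ ≤ B / μ := by
    rw [le_div_iff₀' hμ]
    exact (coercive φstar pstar).trans (hpstar ▸ hBlip φstar θ)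
  have hbound : μ * ‖q - pstar‖ ≤ L * δ + ρ * δ * (B / μ) := by
    refine (mul_norm_sub_le_of_apply_eq (coercive φhat) hq hpstar).trans ?_
    gcongr
    · exact (hsmooth θ φhat φstar).trans (by gcongr)
    · exact (hHlip θ φhat φstar).trans (by gcongr)
  have hB : 0 ≤ B := (norm_nonneg _).trans (hBlip φstar θ)
  refine le_of_mul_le_mul_left (hbound.trans ?_) hμ
  calc L * δ + ρ * δ * (B / μ) ≤ 2 * (L * δ + ρ * δ * (B / μ)) := by
        have : 0 ≤ L * δ + ρ * δ * (B / μ) := by positivity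
        linarith
    _ = μ * (2 * δ / μ * (L + B * ρ / μ)) := by field_simp

/-- Bound on the distance between the proxy
`∂_φL^out(φ̂, θ)·(∂²_φL^in(φ̂, θ))⁻¹` and the true `π*`: under strong convexity,
Lipschitz Hessian, `B`-Lipschitzness and `L`-smoothness, if `‖φ*_θ - φ̂‖ ≤ δ < μ/(2ρ)`
then the proxy is within `(2δ/μ)(L + Bρ/μ)` of `π*`. -/
theorem stmt_11 {n m : ℕ}
    (Lin Lout : EuclideanSpace ℝ (Fin n) × EuclideanSpace ℝ (Fin m) → ℝ)
    (hLin : ContDiff ℝ 2 Lin) (hLout : ContDiff ℝ 1 Lout)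
    (μ ρ B L : ℝ) (hμ : 0 < μ) (hρ : 0 < ρ) (hB : 0 < B) (hL : 0 < L)
    (hsc : ∀ φ θ v, μ * ‖v‖ ^ 2 ≤ hess11 Lin φ θ v v)
    (hHlip : ∀ θ φ φ', ‖hess11 Lin φ θ - hess11 Lin φ' θ‖ ≤ ρ * ‖φ - φ'‖)
    (hBlip : ∀ φ θ, ‖gradPhi11 Lout φ θ‖ ≤ B)
    (hsmooth : ∀ θ φ φ', ‖gradPhi11 Lout φ θ - gradPhi11 Lout φ' θ‖ ≤ L * ‖φ - φ'‖)
    (θ : EuclideanSpace ℝ (Fin m)) (φstar φhat : EuclideanSpace ℝ (Fin n))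
    (hmin : ∀ ψ, Lin (φstar, θ) ≤ Lin (ψ, θ))
    (δ : ℝ) (hδpos : 0 < δ) (hδ : δ < μ / (2 * ρ)) (hφ : ‖φstar - φhat‖ ≤ δ)
    (pstar : EuclideanSpace ℝ (Fin n))
    (hpstar : hess11 Lin φstar θ pstar = gradPhi11 Lout φstar θ)
    (q : EuclideanSpace ℝ (Fin n))
    (hq : hess11 Lin φhat θ q = gradPhi11 Lout φhat θ) :
    ‖q - pstar‖ ≤ (2 * δ / μ) * (L + B * ρ / μ) :=
  stmt_11_general Lin Lout μ ρ B L hμ hρ hL hsc hHlip hBlip hsmooth θ φstar φhat δ hφ pstar hpstar q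
    hq
end

section
/- Let f : ℝ → ℝⁿ be p-times continuously differentiable near 0 and let α ∈ ℝᵖ solve the Vandermonde system ∑_{i=0}^{p-1} α_i·i^k = [k = 1] for k = 0, …, p-1. Then ∑_{i=0}^{p-1} α_i·f(iβ) = β·f'(0) + O(β^p) as β → 0⁺. -/
/-!
Expand `f` around `0` to order `p - 1` on a small interval `[0, r]`. By the Vandermonde
conditions, the weights `α` annihilate every monomial `x ^ k`, `k < p`, except `x`, which they
send to `β`; so they map the Taylor polynomial to exactly `β f'(0)`, and the Taylor remainder,
bounded by `C x ^ p` on `[0, r]`, contributes `O(β ^ p)` at the nodes `iβ ≤ r`.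
-/

open Set Finset Nat

variable {E : Type*} [NormedAddCommGroup E] [NormedSpace ℝ E]

theorem ContDiffAt.exists_norm_sub_taylorWithinEval_le {f : ℝ → E} {a : ℝ} {m : ℕ}
    (hf : ContDiffAt ℝ (m + 1) f a) :
    ∃ b, a < b ∧ ∃ C, 0 ≤ C ∧ ∀ x ∈ Icc a b,
      ‖f x - taylorWithinEval f m (Icc a b) a x‖ ≤ C * (x - a) ^ (m + 1) := by
  obtain ⟨ε, hε, hball⟩ := Metric.eventually_nhds_iff_ball.mp (hf.eventually (by simp))
  have hfb : ContDiffOn ℝ (m + 1) f (Icc a (a + ε / 2)) := fun x hx =>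
    (hball x (by rw [Real.ball_eq_Ioo]; constructor <;> linarith [hx.1, hx.2])).contDiffWithinAt
  obtain ⟨C, hC⟩ := exists_taylor_mean_remainder_bound (by linarith) hfb
  refine ⟨a + ε / 2, by linarith, max C 0, le_max_right _ _, fun x hx => (hC x hx).trans ?_⟩
  have : 0 ≤ x - a := sub_nonneg.mpr hx.1
  gcongr
  exact le_max_left _ _

theorem sum_smul_taylorWithinEval {ι : Type*} [Fintype ι] (f : ℝ → E) (m : ℕ) (s : Set ℝ)
    (x₀ β : ℝ) (α c : ι → ℝ) :
    ∑ i, α i • taylorWithinEval f m s x₀ (x₀ + c i * β) =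
      ∑ k ∈ range (m + 1),
        ((∑ i, α i * c i ^ k) * β ^ k / k !) • iteratedDerivWithin k f s x₀ := by
  simp only [taylor_within_apply, add_sub_cancel_left, smul_sum, smul_smul]
  rw [sum_comm]
  refine sum_congr rfl fun k _ => ?_
  rw [← sum_smul, sum_mul, sum_div]
  congr 1
  refine sum_congr rfl fun i _ => ?_
  rw [mul_pow]
  ring

theorem sum_smul_taylorWithinEval_of_moments {ι : Type*} [Fintype ι] (f : ℝ → E) (m : ℕ)
    (s : Set ℝ) (x₀ β : ℝ) (α c : ι → ℝ)
    (hα : ∀ k ≤ m, ∑ i, α i * c i ^ k = if k = 1 then 1 else 0) :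
    ∑ i, α i • taylorWithinEval f m s x₀ (x₀ + c i * β) =
      if m = 0 then 0 else β • iteratedDerivWithin 1 f s x₀ := by
  rw [sum_smul_taylorWithinEval]
  rw [sum_congr rfl fun k hk => by rw [hα k (Nat.lt_succ_iff.mp (mem_range.mp hk))]]
  simp only [ite_mul, one_mul, zero_mul, ite_div, zero_div, ite_smul, zero_smul]
  rw [sum_ite_eq' (range (m + 1)) 1]
  rcases m with _ | m <;> simp

theorem norm_sum_smul_comp_mul_le {ι : Type*} [Fintype ι] {g : ℝ → E} {C r β : ℝ} {q : ℕ}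
    (hg : ∀ x ∈ Icc 0 r, ‖g x‖ ≤ C * x ^ q) (α c : ι → ℝ) (hc : ∀ i, 0 ≤ c i)
    (hβ : 0 ≤ β) (hcβ : ∀ i, c i * β ≤ r) :
    ‖∑ i, α i • g (c i * β)‖ ≤ (∑ i, |α i| * c i ^ q) * C * β ^ q := by
  calc ‖∑ i, α i • g (c i * β)‖ ≤ ∑ i, |α i| * (C * (c i * β) ^ q) := by
        refine (norm_sum_le _ _).trans (sum_le_sum fun i _ => ?_)
        rw [norm_smul, Real.norm_eq_abs]
        exact mul_le_mul_of_nonneg_left (hg _ ⟨mul_nonneg (hc i) hβ, hcβ i⟩) (abs_nonneg _)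
    _ = (∑ i, |α i| * c i ^ q) * C * β ^ q := by
        rw [sum_mul, sum_mul]
        refine sum_congr rfl fun i _ => ?_
        rw [mul_pow]
        ring

/-- Correctness of the `p`-point forward finite difference estimator: if `f` is C^p
near `0` and `α` solves the Vandermonde system `∑ α_i i^k = [k = 1]`, then
`∑_{i=0}^{p-1} α_i f(iβ) = β f'(0) + O(β^p)` as `β → 0⁺`. -/
theorem stmt_15 {n : ℕ} (p : ℕ) (hp : 1 ≤ p)
    (f : ℝ → EuclideanSpace ℝ (Fin n)) (hf : ContDiffAt ℝ p f 0)
    (α : Fin p → ℝ)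
    (hα : ∀ k : Fin p,
      ∑ i : Fin p, α i * ((i : ℕ) : ℝ) ^ (k : ℕ) = if (k : ℕ) = 1 then 1 else 0) :
    ∃ K β₀ : ℝ, 0 < K ∧ 0 < β₀ ∧ ∀ β : ℝ, 0 < β → β < β₀ →
      ‖(∑ i : Fin p, α i • f (((i : ℕ) : ℝ) * β)) - β • deriv f 0‖ ≤ K * β ^ p := by
  obtain ⟨m, rfl⟩ : ∃ m, p = m + 1 := ⟨p - 1, by omega⟩
  obtain ⟨r, hr, C, hC, hTaylor⟩ :=
    (mod_cast hf : ContDiffAt ℝ (m + 1) f 0).exists_norm_sub_taylorWithinEval_le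
  set T := taylorWithinEval f m (Icc 0 r) 0
  set D := deriv f 0
  have hD : iteratedDerivWithin 1 f (Icc 0 r) 0 = D := by
    rw [iteratedDerivWithin_one]
    exact (hf.differentiableAt (by simp)).derivWithin (uniqueDiffOn_Icc hr 0 ⟨le_rfl, hr.le⟩)
  have hTsum (β : ℝ) :
      ∑ i : Fin (m + 1), α i • T ((i : ℝ) * β) = if m = 0 then 0 else β • D := by
    simpa only [zero_add, hD] using sum_smul_taylorWithinEval_of_moments f m (Icc 0 r) 0 β α
      (fun i => (i : ℝ)) fun k hk => hα ⟨k, by omega⟩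
  set A := ∑ i : Fin (m + 1), |α i| * (i : ℝ) ^ (m + 1)
  refine ⟨A * C + ‖D‖ + 1, r / (m + 1), by positivity, by positivity, fun β hβ hβr => ?_⟩
  have hiβ (i : Fin (m + 1)) : (i : ℝ) * β ≤ r := by
    have hi : (i : ℝ) ≤ m + 1 := by exact_mod_cast i.2.le
    calc (i : ℝ) * β ≤ (m + 1) * β := by gcongr
      _ ≤ r := by rw [lt_div_iff₀ (by positivity)] at hβr; linarith
  have hR : ‖∑ i : Fin (m + 1), α i • (f ((i : ℝ) * β) - T ((i : ℝ) * β))‖ ≤ A * C * β ^ (m + 1) :=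
    norm_sum_smul_comp_mul_le (g := fun x => f x - T x) (fun x hx => by simpa using hTaylor x hx)
      α _ (fun i => i.val.cast_nonneg) hβ.le hiβ
  have hP : ‖∑ i : Fin (m + 1), α i • T ((i : ℝ) * β) - β • D‖ ≤ ‖D‖ * β ^ (m + 1) := by
    rw [hTsum]
    -- for `p = 1` the estimator vanishes identically and `β f'(0)` is itself `O(β)`
    rcases m with _ | m
    · simp [norm_smul, abs_of_pos hβ, mul_comm]
    · simpa using by positivity
  calc ‖∑ i : Fin (m + 1), α i • f ((i : ℝ) * β) - β • D‖
      = ‖∑ i : Fin (m + 1), α i • (f ((i : ℝ) * β) - T ((i : ℝ) * β)) +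
          (∑ i : Fin (m + 1), α i • T ((i : ℝ) * β) - β • D)‖ := by
        simp only [smul_sub, sum_sub_distrib, sub_add_sub_cancel]
    _ ≤ A * C * β ^ (m + 1) + ‖D‖ * β ^ (m + 1) := norm_add_le_of_le hR hP
    _ ≤ (A * C + ‖D‖ + 1) * β ^ (m + 1) := by nlinarith [pow_pos hβ (m + 1)]
end
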